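/- Consider the v-directional blow-up system ż = −ACz + Czv − Az² + (1−C)z²v − z³v, v̇ = Bv(1 − zv − Cv), with positive real parameters A, B, C. Its equilibrium points on the line {v = 0} are exactly (0,0) and (−C, 0). The Jacobian matrix at (0,0) has eigenvalues B > 0 and −AC < 0, so (0,0) is a hyperbolic saddle; the Jacobian matrix at (−C, 0) has eigenvalues B > 0 and AC > 0, so (−C, 0) is a hyperbolic unstable node. -/

import Mathlib

/-!
On `{v = 0}` the field reduces to `(-A z (z + C), 0)`. At an equilibrium `(z₀, 0)` the Jacobian
is diagonal, since `∂ż/∂v = z₀ (C + z₀) (1 - z₀)` vanishes there and `v̇` has no linear term in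
`z`; its eigenvalues are therefore the diagonal entries `-AC - 2A z₀` and `B`.
-/

open Module.End

section
variable {R : Type*} [CommRing R] [TopologicalSpace R] [IsTopologicalRing R]

def diagCLM (a b : R) : R × R →L[R] R × R :=
  (a • ContinuousLinearMap.id R R).prodMap (b • ContinuousLinearMap.id R R)

@[simp]
theorem diagCLM_apply (a b : R) (x : R × R) : diagCLM a b x = (a * x.1, b * x.2) := rfl

variable [Nontrivial R]

theorem hasEigenvalue_diagCLM_left (a b : R) : HasEigenvalue (diagCLM a b).toLinearMap a :=
  hasEigenvalue_of_hasEigenvector (x := (1, 0)) <|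
    hasEigenvector_iff.mpr ⟨by simp [Prod.smul_def], by simp⟩

theorem hasEigenvalue_diagCLM_right (a b : R) : HasEigenvalue (diagCLM a b).toLinearMap b :=
  hasEigenvalue_of_hasEigenvector (x := (0, 1)) <|
    hasEigenvector_iff.mpr ⟨by simp [Prod.smul_def], by simp⟩

end

def blowUpField (A B C : ℝ) (p : ℝ × ℝ) : ℝ × ℝ :=
  (-(A * C * p.1) + C * p.1 * p.2 - A * p.1 ^ 2 + (1 - C) * p.1 ^ 2 * p.2 - p.1 ^ 3 * p.2,
   B * p.2 * (1 - p.1 * p.2 - C * p.2))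

theorem blowUpField_eq_zero_iff {A : ℝ} (hA : A ≠ 0) (B C z : ℝ) :
    blowUpField A B C (z, 0) = (0, 0) ↔ z = 0 ∨ z = -C := by
  have : blowUpField A B C (z, 0) = (-(A * z * (z + C)), 0) := by
    simp only [blowUpField]; ext <;> ring
  rw [this, Prod.mk.injEq, neg_eq_zero, mul_eq_zero, mul_eq_zero, add_eq_zero_iff_eq_neg]
  simp [hA]

theorem hasFDerivAt_blowUpField (A B C : ℝ) {z : ℝ} (hz : z * (C + z) = 0) :
    HasFDerivAt (blowUpField A B C) (diagCLM (-(A * C) - 2 * A * z) B) (z, 0) := by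
  have hz' : HasFDerivAt (fun p : ℝ × ℝ => p.1) (ContinuousLinearMap.fst ℝ ℝ ℝ) (z, 0) :=
    hasFDerivAt_fst
  have hv : HasFDerivAt (fun p : ℝ × ℝ => p.2) (ContinuousLinearMap.snd ℝ ℝ ℝ) (z, 0) :=
    hasFDerivAt_snd
  have hzdot := ((((hz'.const_mul (A * C)).neg.add ((hz'.const_mul C).mul hv)).sub
      ((hz'.pow 2).const_mul A)).add (((hz'.pow 2).const_mul (1 - C)).mul hv)).sub
      ((hz'.pow 3).mul hv)
  have hvdot := (hv.const_mul B).mul (((hasFDerivAt_const (1 : ℝ) _).sub (hz'.mul hv)).sub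
      (hv.const_mul C))
  refine (hzdot.prodMk hvdot).congr_fderiv (ContinuousLinearMap.ext fun ⟨x, y⟩ => ?_)
  simp only [zero_smul, add_zero, Nat.add_one_sub_one, pow_one, nsmul_eq_mul, Nat.cast_ofNat,
    mul_zero, zero_sub, Pi.sub_apply, Pi.mul_apply, sub_zero, one_smul, zero_add,
    ContinuousLinearMap.prod_apply, sub_apply, add_apply, neg_apply, smul_apply,
    ContinuousLinearMap.coe_fst', smul_eq_mul, ContinuousLinearMap.coe_snd', diagCLM_apply,
    Prod.mk.injEq, and_true]
  linear_combination (1 - z) * y * hz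

/-- For the v-directional blow-up system
`ż = −ACz + Czv − Az² + (1−C)z²v − z³v`, `v̇ = Bv(1 − zv − Cv)`,
the equilibria on `{v = 0}` are exactly `(0,0)` and `(−C, 0)`; the Jacobian
at `(0,0)` has eigenvalues `B > 0` and `−AC < 0` (hyperbolic saddle), and the
Jacobian at `(−C, 0)` has eigenvalues `B > 0` and `AC > 0`
(hyperbolic unstable node). -/
theorem stmt_18 (A B C : ℝ) (hA : 0 < A) (hB : 0 < B) (hC : 0 < C)
    (F : ℝ × ℝ → ℝ × ℝ)
    (hF : ∀ z v : ℝ, F (z, v) =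
      (-(A * C * z) + C * z * v - A * z ^ 2 + (1 - C) * z ^ 2 * v - z ^ 3 * v,
       B * v * (1 - z * v - C * v))) :
    (∀ z : ℝ, F (z, 0) = (0, 0) ↔ z = 0 ∨ z = -C) ∧
    Module.End.HasEigenvalue (fderiv ℝ F (0, 0)).toLinearMap B ∧
    Module.End.HasEigenvalue (fderiv ℝ F (0, 0)).toLinearMap (-(A * C)) ∧
    0 < B ∧ -(A * C) < 0 ∧
    Module.End.HasEigenvalue (fderiv ℝ F (-C, 0)).toLinearMap B ∧
    Module.End.HasEigenvalue (fderiv ℝ F (-C, 0)).toLinearMap (A * C) ∧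
    0 < A * C := by
  have hFe : F = blowUpField A B C := funext fun ⟨z, v⟩ => hF z v
  have hAC : 0 < A * C := mul_pos hA hC
  have hJ₀ : fderiv ℝ F (0, 0) = diagCLM (-(A * C)) B := by
    rw [hFe, (hasFDerivAt_blowUpField A B C (z := 0) (by ring)).fderiv]
    congr 1
    ring
  have hJC : fderiv ℝ F (-C, 0) = diagCLM (A * C) B := by
    rw [hFe, (hasFDerivAt_blowUpField A B C (z := -C) (by ring)).fderiv]
    congr 1
    ring
  refine ⟨fun z => hFe ▸ blowUpField_eq_zero_iff hA.ne' B C z, ?_, ?_, hB, neg_neg_of_pos hAC,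
    ?_, ?_, hAC⟩
  · exact hJ₀ ▸ hasEigenvalue_diagCLM_right _ _
  · exact hJ₀ ▸ hasEigenvalue_diagCLM_left _ _
  · exact hJC ▸ hasEigenvalue_diagCLM_right _ _
  · exact hJC ▸ hasEigenvalue_diagCLM_left _ _
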